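/- Let S be a Z-graded algebra and a ≥ 1. The a-th quasi-Veronese algebra S^{[a]}, whose degree-i component is the a×a matrix algebra with (p,q)-entry S_{ai+p−q} (0 ≤ p,q ≤ a−1), is isomorphic as a graded algebra to the a-Segre product of the polynomial ring k[x] (with deg x = a) with S, after dividing the grading by a. -/

import Mathlib

/-!
`S` is encoded as a `k`-algebra `B` with grading `ℬ` (`GradedRing`); `k[x]` with `deg x = a` is
graded by `𝒫 i = k·x^m` if `i = a·m` and `0` otherwise.  The `a`-Segre product sits inside
`k[x] ⊗_k Matrix (Fin a) (Fin a) B` with degree-`i` piece `𝒫_i ⊗ M_i`, and the quasi-Veronese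
algebra sits inside `Matrix (Fin a) (Fin a) B` with degree-`n` piece the matrices with entries
in `S_{an+p−q}`.  Dividing the grading by `a` is witnessed by the algebra homomorphism
`Ψ : k[x] ⊗ Matrix B → Matrix B` evaluating `x ↦ 1`.

Since `𝒫_{am} = k·x^m`, the degree-`am` Segre piece is `x^m ⊗ S^{[a]}_m`, on which `Ψ` is just
`x^m ⊗ v ↦ v`, and the Segre pieces in the other degrees vanish.  Injectivity of `Ψ` on the
whole Segre product therefore reduces to the independence of the quasi-Veronese pieces, which
is inherited entrywise from the direct sum decomposition of `S` because `i ↦ i + p − q` is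
injective.
-/

open TensorProduct Polynomial

noncomputable section

variable (k : Type) [CommRing k]
variable (B : Type) [Ring B] [Algebra k B] (ℬ : ℤ → Submodule k B) [GradedRing ℬ]

/-- The matrices whose `(p,q)`-entry lies in `S_{i+p−q}`; for `i = a·n` this is the
degree-`n` piece of the `a`-th quasi-Veronese algebra `S^{[a]}`. -/
def qvPiece (a : ℕ) (i : ℤ) : Submodule k (Matrix (Fin a) (Fin a) B) where
  carrier := {m | ∀ p q : Fin a, m p q ∈ ℬ (i + (p : ℤ) - (q : ℤ))}
  add_mem' := fun hm hm' p q => (ℬ _).add_mem (hm p q) (hm' p q)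
  zero_mem' := fun p q => (ℬ _).zero_mem
  smul_mem' := fun c m hm p q => (ℬ _).smul_mem c (hm p q)

/-- The grading of `k[x]` with `deg x = a` : the degree-`i` piece is `k·x^m` if `i = a·m`,
and `0` otherwise. -/
def polyPiece (a : ℕ) (i : ℤ) : Submodule k (Polynomial k) :=
  ⨆ (m : ℕ) (_ : i = (a : ℤ) * m), Submodule.span k {Polynomial.X ^ m}

/-- The degree-`i` piece of the `a`-Segre product of `k[x]` (`deg x = a`) with `S`, inside
`k[x] ⊗_k Matrix (Fin a) (Fin a) B`. -/
def polySegrePiece (a : ℕ) (i : ℤ) : Submodule k (Polynomial k ⊗[k] Matrix (Fin a) (Fin a) B) :=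
  LinearMap.range (TensorProduct.map (polyPiece k a i).subtype (qvPiece k B ℬ a i).subtype)

/-- The collapse map `k[x] ⊗ₖ Matrix B → Matrix B` evaluating `x ↦ 1`; it witnesses the
division of the grading by `a`. -/
def collapseQV (a : ℕ) : Polynomial k ⊗[k] Matrix (Fin a) (Fin a) B →ₐ[k] Matrix (Fin a) (Fin a) B :=
  Algebra.TensorProduct.lift
    ((Algebra.ofId k (Matrix (Fin a) (Fin a) B)).comp (Polynomial.aeval (1 : k)))
    (AlgHom.id k (Matrix (Fin a) (Fin a) B))
    (fun p m => by
      rw [AlgHom.comp_apply, Algebra.ofId_apply]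
      exact Algebra.commutes _ _)


theorem LinearMap.injOn_iSup_of_iSupIndep {R M N ι : Type*} [Ring R] [AddCommGroup M]
    [AddCommGroup N] [Module R M] [Module R N] {p : ι → Submodule R M} {q : ι → Submodule R N}
    (f : M →ₗ[R] N) (hq : iSupIndep q) (hmaps : ∀ i, (p i).map f ≤ q i)
    (hinj : ∀ i, Set.InjOn f (p i)) : Set.InjOn f ↑(⨆ i, p i) := by
  classical
  simp_rw [← LinearMap.disjoint_ker_iff_injOn, Submodule.disjoint_def, LinearMap.mem_ker]
    at hinj ⊢
  intro x hx hfx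
  obtain ⟨g, hg, rfl⟩ := (Submodule.mem_iSup_iff_exists_finsupp p x).mp hx
  have hfg : ∀ i ∈ g.support, f (g i) = 0 :=
    (iSupIndep_iff_finsetSum_eq_zero_imp_eq_zero q).mp hq g.support (fun i => f (g i))
      (fun i _ => hmaps i ⟨g i, hg i, rfl⟩) (by rwa [Finsupp.sum, map_sum] at hfx)
  exact Finset.sum_eq_zero fun i hi => hinj i (g i) (hg i) (hfg i hi)

section

variable {k B} {𝒜 : ℤ → Submodule k B} {a : ℕ}

theorem polyPiece_natCast_mul (ha : 0 < a) (m : ℕ) :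
    polyPiece k a (a * m) = Submodule.span k {(X : k[X]) ^ m} := by
  have ha' : (a : ℤ) ≠ 0 := by positivity
  simp_rw [polyPiece, mul_right_inj' ha', Nat.cast_inj]
  exact iSup_iSup_eq_right

theorem polyPiece_eq_bot {i : ℤ} (hi : ∀ m : ℕ, i ≠ a * m) : polyPiece k a i = ⊥ :=
  le_bot_iff.mp (iSup₂_le fun m him => absurd him (hi m))

theorem polySegrePiece_eq_map₂ (i : ℤ) :
    polySegrePiece k B 𝒜 a i = Submodule.map₂ (TensorProduct.mk k _ _) (polyPiece k a i)
      (qvPiece k B 𝒜 a i) :=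
  TensorProduct.range_mapIncl _ _

theorem polySegrePiece_natCast_mul (ha : 0 < a) (m : ℕ) :
    polySegrePiece k B 𝒜 a (a * m) =
      (qvPiece k B 𝒜 a (a * m)).map (TensorProduct.mk k _ _ ((X : k[X]) ^ m)) := by
  rw [polySegrePiece_eq_map₂, polyPiece_natCast_mul ha, Submodule.map₂_span_singleton_eq_map]

theorem polySegrePiece_eq_bot {i : ℤ} (hi : ∀ m : ℕ, i ≠ a * m) :
    polySegrePiece k B 𝒜 a i = ⊥ := by
  rw [polySegrePiece_eq_map₂, polyPiece_eq_bot hi, Submodule.map₂_bot_left]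

theorem iSup_polySegrePiece :
    ⨆ i, polySegrePiece k B 𝒜 a i = ⨆ m : ℕ, polySegrePiece k B 𝒜 a (a * m) := by
  refine le_antisymm (iSup_le fun i => ?_) (iSup_le fun m => le_iSup _ _)
  by_cases hi : ∃ m : ℕ, i = a * m
  · obtain ⟨m, rfl⟩ := hi
    exact le_iSup (fun m : ℕ => polySegrePiece k B 𝒜 a (a * m)) m
  · push Not at hi
    simp [polySegrePiece_eq_bot hi]

theorem collapseQV_tmul (p : k[X]) (v : Matrix (Fin a) (Fin a) B) :
    collapseQV k B a (p ⊗ₜ v) = p.eval 1 • v := by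
  simp [collapseQV, Algebra.smul_def]

theorem collapseQV_comp_mk_X_pow (m : ℕ) :
    (collapseQV k B a).toLinearMap ∘ₗ TensorProduct.mk k _ _ ((X : k[X]) ^ m) =
      LinearMap.id := by
  ext v : 1
  simp [collapseQV_tmul]

theorem map_collapseQV_polySegrePiece (ha : 0 < a) (m : ℕ) :
    (polySegrePiece k B 𝒜 a (a * m)).map (collapseQV k B a).toLinearMap =
      qvPiece k B 𝒜 a (a * m) := by
  rw [polySegrePiece_natCast_mul ha, ← Submodule.map_comp, collapseQV_comp_mk_X_pow,
    Submodule.map_id]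

theorem injOn_collapseQV_polySegrePiece (ha : 0 < a) (m : ℕ) :
    Set.InjOn (collapseQV k B a) (polySegrePiece k B 𝒜 a (a * m)) := by
  rw [polySegrePiece_natCast_mul ha]
  rintro _ ⟨v, -, rfl⟩ _ ⟨w, -, rfl⟩ hvw
  simpa [collapseQV_tmul] using congrArg (TensorProduct.mk k _ _ ((X : k[X]) ^ m)) hvw

theorem iSupIndep_qvPiece (h𝒜 : iSupIndep 𝒜) : iSupIndep (qvPiece k B 𝒜 a) := by
  rw [iSupIndep_iff_finsetSum_eq_zero_imp_eq_zero]
  intro s v hv hsum i hi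
  ext p q
  let e := (Equiv.addRight ((p : ℤ) - q)).toEmbedding
  have hentry := (iSupIndep_iff_finsetSum_eq_zero_imp_eq_zero 𝒜).mp h𝒜 (s.map e)
    (fun j => (v (j - (p - q)) : Matrix (Fin a) (Fin a) B) p q) (by
      simp only [Finset.mem_map]
      rintro _ ⟨j, hj, rfl⟩
      simpa [e, add_sub_assoc] using hv j hj p q)
    (by simpa [e, Matrix.sum_apply] using congr_fun₂ hsum p q) (e i)
    (Finset.mem_map_of_mem e hi)
  simpa [e] using hentry

end

/-- The `a`-th quasi-Veronese algebra `S^{[a]}` is isomorphic, as a graded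
algebra, to the `a`-Segre product of `k[x]` (`deg x = a`) with `S` after dividing the grading
by `a`: the Segre pieces vanish in degrees not of the form `a·m`, and the algebra map `Ψ`
(evaluation `x ↦ 1`) is injective on the Segre product and identifies the degree-`a·n` Segre
piece with the degree-`n` quasi-Veronese piece. -/
theorem quasiVeronese_iso_aSegre (a : ℕ) (ha : 1 ≤ a) :
    -- the `a`-Segre product with `k[x]` is concentrated in degrees `a·ℕ` …
    (∀ i : ℤ, (∀ m : ℕ, i ≠ (a : ℤ) * m) → polySegrePiece k B ℬ a i = ⊥) ∧
    -- … and `Ψ` identifies its degree-`a·n` piece with the degree-`n` quasi-Veronese piece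
    (∀ n : ℕ, Submodule.map (collapseQV k B a).toLinearMap
        (polySegrePiece k B ℬ a ((a : ℤ) * n)) = qvPiece k B ℬ a ((a : ℤ) * n)) ∧
    -- `Ψ` is injective on the `a`-Segre product …
    (Set.InjOn (collapseQV k B a) ↑(⨆ i : ℤ, polySegrePiece k B ℬ a i)) ∧
    -- … and maps it onto the quasi-Veronese algebra (`Ψ` being an algebra homomorphism,
    -- this is an isomorphism of graded algebras after dividing the grading by `a`)
    (Submodule.map (collapseQV k B a).toLinearMap (⨆ i : ℤ, polySegrePiece k B ℬ a i)
      = ⨆ n : ℕ, qvPiece k B ℬ a ((a : ℤ) * n)) := by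
  have hℬ : iSupIndep ℬ := (DirectSum.Decomposition.isInternal ℬ).submodule_iSupIndep
  refine ⟨fun i => polySegrePiece_eq_bot, map_collapseQV_polySegrePiece ha, ?_, ?_⟩
  · rw [iSup_polySegrePiece]
    refine LinearMap.injOn_iSup_of_iSupIndep _ ?_
      (fun m => (map_collapseQV_polySegrePiece ha m).le) (injOn_collapseQV_polySegrePiece ha)
    exact (iSupIndep_qvPiece hℬ).comp fun m n hmn => by
      simpa [Nat.one_le_iff_ne_zero.mp ha] using hmn
  · simp_rw [iSup_polySegrePiece, Submodule.map_iSup, map_collapseQV_polySegrePiece ha]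

end
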